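/- Let d ≥ 1 be an integer and D ⊂ ℝ^d a nonempty bounded domain such that for some L > 0 the Lebesgue measure of {x ∈ ℝ^d : dist(x, ∂D) ≤ t} is at most L t for every t ∈ (0, 3√d]. For ε > 0 and a positive integer k with ε ≤ kε ≤ 1, set Q_{k,z} := εz + [−kε/2, kε/2]^d for z ∈ kℤ^d, N_k := {z ∈ kℤ^d : Q_{k,z} ∩ D ≠ ∅}, and N̊_k := {z ∈ N_k : Q_{k,z} ⊆ D and dist(Q_{k,z}, ∂D) ≥ ε}. Then there is a constant C = C(d) such that #(N_k \ N̊_k) ≤ C L (kε)^{1−d}. -/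

import Mathlib

open Metric Set Bornology MeasureTheory

noncomputable section

/-- The mesoscopic cube `Q_{k,z} := εz + [−kε/2, kε/2]^d`, for `z = k·y ∈ kℤ^d`. -/
def mesoCube (d : ℕ) (ε : ℝ) (k : ℕ) (y : Fin d → ℤ) : Set (EuclideanSpace ℝ (Fin d)) :=
  {x | ∀ i, |x i - ε * ((k : ℝ) * (y i : ℝ))| ≤ (k : ℝ) * ε / 2}

/-- `N_k := {z ∈ kℤ^d : Q_{k,z} ∩ D ≠ ∅}`. -/
def Nk (d : ℕ) (D : Set (EuclideanSpace ℝ (Fin d))) (ε : ℝ) (k : ℕ) : Set (Fin d → ℤ) :=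
  {y | (mesoCube d ε k y ∩ D).Nonempty}

/-- `N̊_k := {z ∈ N_k : Q_{k,z} ⊆ D and dist(Q_{k,z}, ∂D) ≥ ε}`. -/
def Nk0 (d : ℕ) (D : Set (EuclideanSpace ℝ (Fin d))) (ε : ℝ) (k : ℕ) : Set (Fin d → ℤ) :=
  {y ∈ Nk d D ε k | mesoCube d ε k y ⊆ D ∧
    ∀ x ∈ mesoCube d ε k y, ∀ p ∈ frontier D, ε ≤ dist x p}

open scoped ENNReal

theorem IsPreconnected.inter_frontier_nonempty {X : Type*} [TopologicalSpace X] {s t : Set X}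
    (hs : IsPreconnected s) (hin : (s ∩ t).Nonempty) (hout : (s \ t).Nonempty) :
    (s ∩ frontier t).Nonempty := by
  by_contra h
  have hcover : s ⊆ interior t ∪ (closure t)ᶜ := fun x hx => by
    by_contra hx'
    simp only [Set.mem_union, Set.mem_compl_iff, not_or, not_not] at hx'
    exact h ⟨x, hx, hx'.2, hx'.1⟩
  obtain ⟨x, hxs, hxt⟩ := hin
  have hxi : x ∈ interior t := (hcover hxs).resolve_right (not_not.mpr (subset_closure hxt))
  have hst : s ⊆ interior t :=
    hs.subset_left_of_subset_union isOpen_interior isClosed_closure.isOpen_compl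
      (disjoint_compl_right.mono_left interior_subset_closure) hcover ⟨x, hxs, hxi⟩
  obtain ⟨z, hzs, hzt⟩ := hout
  exact hzt (interior_subset (hst hzs))

theorem infDist_frontier_le_of_not_subset_and_far {X : Type*} [PseudoMetricSpace X]
    {Q D : Set X} {δ ε : ℝ} (hQ : IsPreconnected Q) (hdiam : ∀ x ∈ Q, ∀ z ∈ Q, dist x z ≤ δ)
    (hε : 0 ≤ ε) (hmeet : (Q ∩ D).Nonempty)
    (hnot : ¬(Q ⊆ D ∧ ∀ x ∈ Q, ∀ p ∈ frontier D, ε ≤ dist x p)) {x : X} (hx : x ∈ Q) :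
    infDist x (frontier D) ≤ δ + ε := by
  rw [not_and_or, not_subset] at hnot
  rcases hnot with ⟨z, hzQ, hzD⟩ | hnear
  · obtain ⟨p, hpQ, hpD⟩ := hQ.inter_frontier_nonempty hmeet ⟨z, hzQ, hzD⟩
    calc infDist x (frontier D) ≤ dist x p := infDist_le_dist_of_mem hpD
      _ ≤ δ + ε := by linarith [hdiam x hx p hpQ]
  · simp only [not_forall, not_le] at hnear
    obtain ⟨z, hzQ, p, hpD, hzp⟩ := hnear
    calc infDist x (frontier D) ≤ dist x p := infDist_le_dist_of_mem hpD
      _ ≤ dist x z + dist z p := dist_triangle _ _ _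
      _ ≤ δ + ε := by linarith [hdiam x hx z hzQ]

theorem Set.PairwiseDisjoint.finite_and_ncard_mul_le_measure {α ι : Type*} [MeasurableSpace α]
    {μ : Measure α} {S : Set ι} {B : ι → Set α} {N : Set α} {v : ℝ≥0∞}
    (hdisj : S.PairwiseDisjoint B) (hmeas : ∀ i ∈ S, MeasurableSet (B i))
    (hsub : ∀ i ∈ S, B i ⊆ N) (hv : ∀ i ∈ S, v ≤ μ (B i)) (hv0 : v ≠ 0) (hN : μ N ≠ ∞) :
    S.Finite ∧ S.ncard * v ≤ μ N := by
  have hfinset (F : Finset ι) (hF : ↑F ⊆ S) : F.card * v ≤ μ N :=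
    calc (F.card : ℝ≥0∞) * v = ∑ _i ∈ F, v := by rw [Finset.sum_const, nsmul_eq_mul]
      _ ≤ ∑ i ∈ F, μ (B i) := Finset.sum_le_sum fun i hi => hv i (hF hi)
      _ = μ (⋃ i ∈ F, B i) :=
        (measure_biUnion_finset (hdisj.subset hF) fun i hi => hmeas i (hF hi)).symm
      _ ≤ μ N := measure_mono (iUnion₂_subset fun i hi => hsub i (hF hi))
  have hfin : S.Finite := by
    by_contra hinf
    obtain ⟨n, hn⟩ := ENNReal.exists_nat_mul_gt hv0 hN
    obtain ⟨F, hFS, rfl⟩ := Set.Infinite.exists_subset_card_eq hinf n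
    exact (hfinset F hFS).not_gt hn
  refine ⟨hfin, ?_⟩
  simpa [Set.ncard_eq_toFinset_card S hfin] using hfinset hfin.toFinset (by simp)

theorem EuclideanSpace.dist_le_sqrt_card_mul_dist_ofLp {ι : Type*} [Fintype ι]
    (x y : EuclideanSpace ℝ ι) :
    dist x y ≤ √(Fintype.card ι) * dist (WithLp.ofLp x) (WithLp.ofLp y) := by
  convert (PiLp.antilipschitzWith_ofLp 2 (fun _ : ι => ℝ)).le_mul_dist x y using 2
  simp [Real.sqrt_eq_rpow]

def cubeCenter {d : ℕ} (ε : ℝ) (k : ℕ) (y : Fin d → ℤ) : Fin d → ℝ :=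
  fun i => ε * ((k : ℝ) * (y i : ℝ))

def openMesoCube (d : ℕ) (ε : ℝ) (k : ℕ) (y : Fin d → ℤ) : Set (EuclideanSpace ℝ (Fin d)) :=
  WithLp.ofLp ⁻¹' ball (cubeCenter ε k y) ((k : ℝ) * ε / 2)

section Cubes

variable {d : ℕ} {ε : ℝ} {k : ℕ}

-- `Fin d → ℝ` carries the sup metric, whose balls are cubes.
theorem mesoCube_eq_preimage_closedBall (hκ : 0 ≤ (k : ℝ) * ε) (y : Fin d → ℤ) :
    mesoCube d ε k y = WithLp.ofLp ⁻¹' closedBall (cubeCenter ε k y) ((k : ℝ) * ε / 2) := by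
  ext x
  simp [mesoCube, cubeCenter, dist_pi_le_iff (by positivity : 0 ≤ (k : ℝ) * ε / 2),
    Real.dist_eq]

theorem convex_mesoCube (hκ : 0 ≤ (k : ℝ) * ε) (y : Fin d → ℤ) :
    Convex ℝ (mesoCube d ε k y) := by
  rw [mesoCube_eq_preimage_closedBall hκ]
  exact (convex_closedBall _ _).linear_preimage (WithLp.linearEquiv 2 ℝ (Fin d → ℝ)).toLinearMap

theorem dist_le_of_mem_mesoCube (hκ : 0 ≤ (k : ℝ) * ε) {y : Fin d → ℤ}
    {x z : EuclideanSpace ℝ (Fin d)} (hx : x ∈ mesoCube d ε k y) (hz : z ∈ mesoCube d ε k y) :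
    dist x z ≤ √d * ((k : ℝ) * ε) := by
  rw [mesoCube_eq_preimage_closedBall hκ] at hx hz
  have hsup : dist (WithLp.ofLp x) (WithLp.ofLp z) ≤ (k : ℝ) * ε := by
    linarith [dist_triangle_right (WithLp.ofLp x) (WithLp.ofLp z) (cubeCenter ε k y),
      mem_closedBall.mp hx, mem_closedBall.mp hz]
  calc dist x z ≤ √d * dist (WithLp.ofLp x) (WithLp.ofLp z) := by
        simpa using EuclideanSpace.dist_le_sqrt_card_mul_dist_ofLp x z
    _ ≤ √d * ((k : ℝ) * ε) := by gcongr

theorem mesoCube_subset_infDist_frontier_le {D : Set (EuclideanSpace ℝ (Fin d))} (hε : 0 ≤ ε)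
    (hkε : ε ≤ (k : ℝ) * ε) {y : Fin d → ℤ} (hy : y ∈ Nk d D ε k \ Nk0 d D ε k) :
    mesoCube d ε k y ⊆ {x | infDist x (frontier D) ≤ (√d + 1) * ((k : ℝ) * ε)} := by
  obtain ⟨hmeet, hnot⟩ := hy
  have hκ : 0 ≤ (k : ℝ) * ε := hε.trans hkε
  intro x hx
  have := infDist_frontier_le_of_not_subset_and_far (convex_mesoCube hκ y).isPreconnected
    (fun _ hx _ hz => dist_le_of_mem_mesoCube hκ hx hz) hε hmeet (fun h => hnot ⟨hmeet, h⟩) hx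
  exact this.trans (by linarith)

theorem openMesoCube_subset_mesoCube (hκ : 0 ≤ (k : ℝ) * ε) (y : Fin d → ℤ) :
    openMesoCube d ε k y ⊆ mesoCube d ε k y := by
  rw [mesoCube_eq_preimage_closedBall hκ]
  exact preimage_mono ball_subset_closedBall

theorem measurableSet_openMesoCube (y : Fin d → ℤ) : MeasurableSet (openMesoCube d ε k y) :=
  measurableSet_ball.preimage (WithLp.measurable_ofLp _ _)

theorem volume_openMesoCube (hκ : 0 < (k : ℝ) * ε) (y : Fin d → ℤ) :
    volume (openMesoCube d ε k y) = ENNReal.ofReal (((k : ℝ) * ε) ^ d) := by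
  rw [openMesoCube, (PiLp.volume_preserving_ofLp (Fin d)).measure_preimage
    measurableSet_ball.nullMeasurableSet, Real.volume_pi_ball _ (half_pos hκ), Fintype.card_fin,
    mul_div_cancel₀ _ two_ne_zero]

open Function in
theorem pairwise_disjoint_openMesoCube (hκ : 0 ≤ (k : ℝ) * ε) :
    Pairwise (Disjoint on openMesoCube d ε k) := by
  intro y y' hne
  obtain ⟨i, hi⟩ := Function.ne_iff.mp hne
  have hgap : (1 : ℝ) ≤ |(y i : ℝ) - y' i| := by exact_mod_cast Int.one_le_abs (sub_ne_zero.mpr hi)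
  refine Disjoint.preimage _ (ball_disjoint_ball ?_)
  calc (k : ℝ) * ε / 2 + (k : ℝ) * ε / 2 ≤ (k : ℝ) * ε * |(y i : ℝ) - y' i| := by nlinarith
    _ = dist (cubeCenter ε k y i) (cubeCenter ε k y' i) := by
        rw [Real.dist_eq, cubeCenter, cubeCenter, ← abs_of_nonneg hκ, ← abs_mul]
        ring_nf
    _ ≤ dist (cubeCenter ε k y) (cubeCenter ε k y') := dist_le_pi_dist _ _ i

end Cubes

/-- the number of boundary cubes of the mesoscopic covering is at most
`C L (kε)^{1−d}`, with `C = C(d)`. -/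
theorem boundary_cubes_count (d : ℕ) (hd : 1 ≤ d) :
    ∃ C > 0, ∀ (D : Set (EuclideanSpace ℝ (Fin d))),
      IsOpen D → D.Nonempty → IsBounded D →
      ∀ L > (0 : ℝ),
        (∀ t ∈ Set.Ioc (0 : ℝ) (3 * Real.sqrt d),
          volume {x : EuclideanSpace ℝ (Fin d) | infDist x (frontier D) ≤ t}
            ≤ ENNReal.ofReal (L * t)) →
      ∀ (ε : ℝ) (k : ℕ), 0 < ε → ε ≤ (k : ℝ) * ε → (k : ℝ) * ε ≤ 1 →
        (Nk d D ε k \ Nk0 d D ε k).Finite ∧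
        ((Nk d D ε k \ Nk0 d D ε k).ncard : ℝ)
          ≤ C * L * ((k : ℝ) * ε) ^ (1 - (d : ℝ)) := by
  have hsqrt : 1 ≤ √(d : ℝ) := Real.one_le_sqrt.mpr (by exact_mod_cast hd)
  refine ⟨√d + 1, by positivity, fun D _ _ _ L hL hvol ε k hε hkε hκle => ?_⟩
  set κ := (k : ℝ) * ε
  have hκ : 0 < κ := hε.trans_le hkε
  set t := (√d + 1) * κ
  have ht : t ∈ Ioc 0 (3 * √d) := ⟨by positivity, by nlinarith⟩
  obtain ⟨hfin, hcard⟩ := Set.PairwiseDisjoint.finite_and_ncard_mul_le_measure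
    ((pairwise_disjoint_openMesoCube hκ.le).set_pairwise _)
    (fun y _ => measurableSet_openMesoCube y)
    (fun y hy => (openMesoCube_subset_mesoCube hκ.le y).trans
      (mesoCube_subset_infDist_frontier_le hε.le hkε hy))
    (fun y _ => (volume_openMesoCube hκ y).ge) (by simpa using pow_pos hκ d)
    (ne_top_of_le_ne_top ENNReal.ofReal_ne_top (hvol t ht))
  have hcount : ((Nk d D ε k \ Nk0 d D ε k).ncard : ℝ) * κ ^ d ≤ L * t := by
    rw [← ENNReal.ofReal_le_ofReal_iff (by positivity), ENNReal.ofReal_mul (by positivity),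
      ENNReal.ofReal_natCast]
    exact hcard.trans (hvol t ht)
  refine ⟨hfin, ?_⟩
  rw [Real.rpow_sub hκ, Real.rpow_one, Real.rpow_natCast, mul_div_assoc',
    le_div_iff₀ (by positivity)]
  linarith
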